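/- Given any program Π, any epistemic splitting set U of Π and any splitting ⟨B_U(Π),T_U(Π)⟩, a total belief view W is a FEEL-world view of Π if and only if W|_U is a FEEL-world view of B_U(Π) and W|_Ū is a FEEL-world view of E_U(Π, W|_U). -/

import Mathlib

namespace Epist

attribute [local instance] Classical.propDecidable

/-- Epistemic formulas over a set (type) of atoms `α`. -/
inductive EForm (α : Type) : Type where
  | bot : EForm α
  | atom : α → EForm α
  | and : EForm α → EForm α → EForm α
  | or : EForm α → EForm α → EForm α
  | imp : EForm α → EForm α → EForm α
  | K : EForm α → EForm α

variable {α : Type}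

/-- ¬φ abbreviates φ → ⊥. -/
def EForm.neg (φ : EForm α) : EForm α := .imp φ .bot

/-- ⊤ abbreviates ¬⊥. -/
def EForm.top : EForm α := EForm.neg .bot

/-- Atoms occurring in a formula. -/
def EForm.atoms : EForm α → Set α
  | .bot => ∅
  | .atom a => {a}
  | .and φ ψ => φ.atoms ∪ ψ.atoms
  | .or φ ψ => φ.atoms ∪ ψ.atoms
  | .imp φ ψ => φ.atoms ∪ ψ.atoms
  | .K φ => φ.atoms

/-- A belief view: a set of HT-interpretations ⟨H,T⟩ (as pairs of sets of atoms). -/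
abbrev BView (α : Type) := Set (Set α × Set α)

/-- W^t : the total belief view {⟨T,T⟩ : ⟨H,T⟩ ∈ W}. -/
def tview (W : BView α) : BView α := (fun i => (i.2, i.2)) '' W

/-- Wellformedness of a belief view: nonempty and H ⊆ T for all members. -/
def isBView (W : BView α) : Prop := W.Nonempty ∧ ∀ i ∈ W, i.1 ⊆ i.2

/-- A belief view is total when all its HT-interpretations are total. -/
def totalView (W : BView α) : Prop := ∀ i ∈ W, i.1 = i.2

/-- Satisfaction of an epistemic formula by a belief interpretation ⟨W,H,T⟩. -/
def sat : EForm α → BView α → Set α → Set α → Prop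
  | .bot, _, _, _ => False
  | .atom a, _, H, _ => a ∈ H
  | .and φ ψ, W, H, T => sat φ W H T ∧ sat ψ W H T
  | .or φ ψ, W, H, T => sat φ W H T ∨ sat ψ W H T
  | .imp φ ψ, W, H, T =>
      (sat φ W H T → sat ψ W H T) ∧ (sat φ (tview W) T T → sat ψ (tview W) T T)
  | .K φ, W, _, _ => ∀ i ∈ W, sat φ W i.1 i.2

/-- ⟨W,H',T'⟩ ⊨ φ for all ⟨H',T'⟩ ∈ W. -/
def epSat (W : BView α) (φ : EForm α) : Prop := ∀ i ∈ W, sat φ W i.1 i.2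

/-- W is an epistemic model of the theory Γ. -/
def epModel (W : BView α) (Γ : Set (EForm α)) : Prop :=
  isBView W ∧ ∀ φ ∈ Γ, epSat W φ

/-- ⟨W,H,T⟩ is a belief model of the theory Γ. -/
def beliefModel (W : BView α) (H T : Set α) (Γ : Set (EForm α)) : Prop :=
  isBView W ∧ H ⊆ T ∧ (∀ φ ∈ Γ, sat φ W H T) ∧ ∀ φ ∈ Γ, epSat W φ

/-- Order ⪯ on belief interpretations: ⟨W',H',T'⟩ ⪯ ⟨W,H,T⟩. -/
def biLE (W' : BView α) (H' T' : Set α) (W : BView α) (H T : Set α) : Prop :=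
  (T' = T ∧ H' ⊆ H) ∧
  (∀ i ∈ W, ∃ H₁, (H₁, i.2) ∈ W' ∧ H₁ ⊆ i.1) ∧
  (∀ i ∈ W', ∃ H₁, (H₁, i.2) ∈ W ∧ i.1 ⊆ H₁)

/-- Strict order ≺ on belief interpretations. -/
def biLT (W' : BView α) (H' T' : Set α) (W : BView α) (H T : Set α) : Prop :=
  biLE W' H' T' W H T ∧ (W', H', T') ≠ (W, H, T)

/-- Order ⪯ on belief views. -/
def viewLE (W₁ W₂ : BView α) : Prop :=
  (∀ i ∈ W₂, ∃ H₁, (H₁, i.2) ∈ W₁ ∧ H₁ ⊆ i.1) ∧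
  (∀ i ∈ W₁, ∃ H₂, (H₂, i.2) ∈ W₂ ∧ i.1 ⊆ H₂)

/-- Strict order ≺ on belief views. -/
def viewLT (W₁ W₂ : BView α) : Prop := viewLE W₁ W₂ ∧ W₁ ≠ W₂

/-- ⟨W,T⟩ is an equilibrium belief model of Γ. -/
def eqBeliefModel (Γ : Set (EForm α)) (W : BView α) (T : Set α) : Prop :=
  totalView W ∧ beliefModel W T T Γ ∧
  ∀ W' H' T', beliefModel W' H' T' Γ → ¬ biLT W' H' T' W T T

/-- ⟨W,T⟩ is a weak equilibrium belief model of Γ: no belief-total (i.e. with total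
view) belief model of Γ is ≺-smaller. -/
def weakEqBeliefModel (Γ : Set (EForm α)) (W : BView α) (T : Set α) : Prop :=
  totalView W ∧ beliefModel W T T Γ ∧
  ∀ W' H' T', totalView W' → beliefModel W' H' T' Γ → ¬ biLT W' H' T' W T T

/-- Identification of a set of propositional interpretations with a total belief view. -/
def ofSets (S : Set (Set α)) : BView α := (fun T => (T, T)) '' S

/-- W is a FAEEL-world view of Γ iff W = { T : ⟨W,T⟩ is an equilibrium belief model }. -/
def FAEEL (Γ : Set (EForm α)) (W : BView α) : Prop :=
  isBView W ∧ totalView W ∧ W = ofSets {T | eqBeliefModel Γ W T}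

/-- W is a weak autoepistemic world view of Γ. -/
def weakAEWorldView (Γ : Set (EForm α)) (W : BView α) : Prop :=
  isBView W ∧ totalView W ∧ W = ofSets {T | weakEqBeliefModel Γ W T}

/-- W is a FEEL-world view of Γ. -/
def FEEL (Γ : Set (EForm α)) (W : BView α) : Prop :=
  totalView W ∧ epModel W Γ ∧ ∀ W', epModel W' Γ → ¬ viewLT W' W

/-- A belief view is simple iff ⟨H,T⟩,⟨H',T⟩ ∈ W imply H = H'. -/
def simpleView (W : BView α) : Prop := ∀ i ∈ W, ∀ j ∈ W, i.2 = j.2 → i.1 = j.1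

/-- W is an EEL-world view of Γ. -/
def EEL (Γ : Set (EForm α)) (W : BView α) : Prop :=
  totalView W ∧ epModel W Γ ∧
  ¬ ∃ W', simpleView W' ∧ epModel W' Γ ∧ tview W' = W ∧ ∃ i ∈ W', i.1 ⊂ i.2

/-- Ordinary here-and-there satisfaction (for objective, i.e. K-free, formulas). -/
def htSat (φ : EForm α) (H T : Set α) : Prop := sat φ (∅ : BView α) H T

/-- T is a stable model of the (objective) theory Δ. -/
def stableModel (Δ : Set (EForm α)) (T : Set α) : Prop :=
  (∀ φ ∈ Δ, htSat φ T T) ∧ ∀ H, H ⊂ T → ¬ ∀ φ ∈ Δ, htSat φ H T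

/-- SM[Δ] : the set of stable models of Δ. -/
def SMset (Δ : Set (EForm α)) : Set (Set α) := {T | stableModel Δ T}

/-- Subjective reduct of a formula w.r.t. a belief view W and a signature U:
each maximal subformula Kφ with Atoms(φ) ⊆ U is replaced by ⊤ if W ⊨ Kφ
and by ⊥ otherwise. -/
noncomputable def reduct (W : BView α) (U : Set α) : EForm α → EForm α
  | .bot => .bot
  | .atom a => .atom a
  | .and φ ψ => .and (reduct W U φ) (reduct W U ψ)
  | .or φ ψ => .or (reduct W U φ) (reduct W U ψ)
  | .imp φ ψ => .imp (reduct W U φ) (reduct W U ψ)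
  | .K φ =>
      if φ.atoms ⊆ U then (if epSat W (.K φ) then EForm.top else .bot)
      else .K (reduct W U φ)

/-- W is a G91-world view of Γ iff W = SM[Γ^W]. -/
def G91 (Γ : Set (EForm α)) (W : BView α) : Prop :=
  isBView W ∧ totalView W ∧ W = ofSets (SMset (reduct W Set.univ '' Γ))

/-- Negatively subjective reduct: each maximal subformula ¬Kφ is replaced
by ⊤ if W ⊭ Kφ and by ⊥ otherwise. -/
noncomputable def negReduct (W : BView α) : EForm α → EForm α
  | .bot => .bot
  | .atom a => .atom a
  | .and φ ψ => .and (negReduct W φ) (negReduct W ψ)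
  | .or φ ψ => .or (negReduct W φ) (negReduct W ψ)
  | .imp (.K φ) .bot => if epSat W (.K φ) then .bot else EForm.top
  | .imp φ ψ => .imp (negReduct W φ) (negReduct W ψ)
  | .K φ => .K (negReduct W φ)

/-- Atom, ⊤ or ⊥. -/
def isAtomBase (φ : EForm α) : Prop := (∃ a, φ = .atom a) ∨ φ = EForm.top ∨ φ = .bot

/-- Objective literals: l, ¬l or ¬¬l for l an atom, ⊤ or ⊥. -/
def isObjLit (φ : EForm α) : Prop :=
  isAtomBase φ ∨ (∃ ψ, isAtomBase ψ ∧ φ = EForm.neg ψ) ∨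
    (∃ ψ, isAtomBase ψ ∧ φ = EForm.neg (EForm.neg ψ))

/-- Subjective literals: Kl, ¬Kl or ¬¬Kl for l an objective literal. -/
def isSubjLit (φ : EForm α) : Prop :=
  (∃ l, isObjLit l ∧ φ = .K l) ∨ (∃ l, isObjLit l ∧ φ = EForm.neg (.K l)) ∨
    (∃ l, isObjLit l ∧ φ = EForm.neg (EForm.neg (.K l)))

/-- Positive subjective literals: Kl. -/
def isPosSubjLit (φ : EForm α) : Prop := ∃ l, isObjLit l ∧ φ = .K l

/-- A rule: a head disjunction of atoms and a body list of literals. -/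
structure ERule (α : Type) where
  head : List α
  body : List (EForm α)

/-- Wellformedness of a rule: every body member is an (objective or subjective) literal. -/
def ERule.wf (r : ERule α) : Prop := ∀ φ ∈ r.body, isObjLit φ ∨ isSubjLit φ

/-- Disjunction of atoms (⊥ when empty). -/
def disjForm : List α → EForm α
  | [] => .bot
  | a :: l => .or (.atom a) (disjForm l)

/-- Conjunction of formulas (⊤ when empty). -/
def conjForm : List (EForm α) → EForm α
  | [] => EForm.top
  | φ :: l => .and φ (conjForm l)

/-- The formula Head(r) ← Body(r) corresponding to a rule. -/
def ERule.form (r : ERule α) : EForm α := .imp (conjForm r.body) (disjForm r.head)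

/-- Atoms of Head(r). -/
def ERule.headAtoms (r : ERule α) : Set α := {a | a ∈ r.head}

/-- Atoms of Body_obj(r). -/
def ERule.objBodyAtoms (r : ERule α) : Set α := {a | ∃ φ ∈ r.body, isObjLit φ ∧ a ∈ φ.atoms}

/-- Atoms of Body_sub(r). -/
def ERule.subjBodyAtoms (r : ERule α) : Set α := {a | ∃ φ ∈ r.body, isSubjLit φ ∧ a ∈ φ.atoms}

/-- Atoms of Body⁺_sub(r). -/
def ERule.posSubjBodyAtoms (r : ERule α) : Set α :=
  {a | ∃ φ ∈ r.body, isPosSubjLit φ ∧ a ∈ φ.atoms}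

/-- Atoms(r). -/
def ERule.atoms (r : ERule α) : Set α := r.headAtoms ∪ {a | ∃ φ ∈ r.body, a ∈ φ.atoms}

/-- A rule is objective if all its body literals are objective. -/
def ERule.objective (r : ERule α) : Prop := ∀ φ ∈ r.body, isObjLit φ

/-- A program is a set of rules. -/
abbrev EProgram (α : Type) := Set (ERule α)

def progWF (P : EProgram α) : Prop := ∀ r ∈ P, r.wf

/-- The theory consisting of the formulas of the rules of a program. -/
def progTheory (P : EProgram α) : Set (EForm α) := ERule.form '' P

def progAtoms (P : EProgram α) : Set α := {a | ∃ r ∈ P, a ∈ r.atoms}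

def progObjective (P : EProgram α) : Prop := ∀ r ∈ P, r.objective

/-- U is an epistemic splitting set of P. -/
def splittingSet (P : EProgram α) (U : Set α) : Prop :=
  ∀ r ∈ P, r.atoms ⊆ U ∨ (r.objBodyAtoms ∪ r.headAtoms) ∩ U = ∅

/-- ⟨B,Tp⟩ is a splitting of P w.r.t. U. -/
def isSplitting (P : EProgram α) (U : Set α) (B Tp : EProgram α) : Prop :=
  B ∩ Tp = ∅ ∧ B ∪ Tp = P ∧ (∀ r ∈ B, r.atoms ⊆ U) ∧
    ∀ r ∈ Tp, (r.objBodyAtoms ∪ r.headAtoms) ∩ U = ∅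

/-- Subjective reduct of a rule. -/
noncomputable def ruleReduct (W : BView α) (U : Set α) (r : ERule α) : ERule α :=
  ⟨r.head, r.body.map (reduct W U)⟩

/-- E_U(Π,W) := (T_U(Π))^W_U, here taking the top part Tp as argument. -/
noncomputable def EU (Tp : EProgram α) (W : BView α) (U : Set α) : EProgram α :=
  ruleReduct W U '' Tp

/-- W_b ⊔ W_t (for total belief views: pointwise unions). -/
def vjoin (W₁ W₂ : BView α) : BView α :=
  {i | ∃ j ∈ W₁, ∃ k ∈ W₂, i = (j.1 ∪ k.1, j.2 ∪ k.2)}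

/-- W|_U (for total belief views: pointwise intersection with U). -/
def vrestrict (W : BView α) (U : Set α) : BView α :=
  {i | ∃ j ∈ W, i = (j.1 ∩ U, j.2 ∩ U)}

/-- Epistemic dependence dep(a,b). -/
def dep (P : EProgram α) (a b : α) : Prop :=
  ∃ r ∈ P, a ∈ r.headAtoms ∪ r.objBodyAtoms ∧ b ∈ r.subjBodyAtoms

/-- Positive epistemic dependence dep⁺(a,b). -/
def depPos (P : EProgram α) (a b : α) : Prop :=
  ∃ r ∈ P, a ∈ r.headAtoms ∪ r.objBodyAtoms ∧ b ∈ r.posSubjBodyAtoms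

/-- P is epistemically stratified. -/
def stratified (P : EProgram α) : Prop :=
  ∃ lam : α → ℕ,
    (∀ r ∈ P, ∀ a ∈ r.atoms \ r.subjBodyAtoms, ∀ b ∈ r.atoms \ r.subjBodyAtoms,
      lam a = lam b) ∧
    ∀ a b, dep P a b → lam a > lam b

/-- P is epistemically tight. -/
def tight (P : EProgram α) : Prop :=
  ∃ lam : α → ℕ,
    (∀ r ∈ P, ∀ a ∈ r.atoms \ r.subjBodyAtoms, ∀ b ∈ r.atoms \ r.subjBodyAtoms,
      lam a = lam b) ∧
    ∀ a b, depPos P a b → lam a > lam b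

/-- A semantics S satisfies the epistemic splitting property. -/
def satisfiesSplitting (S : EProgram α → BView α → Prop) : Prop :=
  ∀ P : EProgram α, progWF P → ∀ U : Set α, splittingSet P U →
    ∀ B Tp : EProgram α, isSplitting P U B Tp →
      ∀ W : BView α,
        S P W ↔ ∃ Wb Wt, S B Wb ∧ S (EU Tp Wb U) Wt ∧ W = vjoin Wb Wt

/-- A semantics S satisfies supra-ASP. -/
def supraASP (S : EProgram α → BView α → Prop) : Prop :=
  ∀ P : EProgram α, progWF P → progObjective P →
    (SMset (progTheory P) ≠ ∅ ∧ ∀ W, (S P W ↔ W = ofSets (SMset (progTheory P)))) ∨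
    (SMset (progTheory P) = ∅ ∧ ∀ W, ¬ S P W)

end Epist

/-!
Satisfaction of a formula whose atoms lie in `U` depends only on the restriction of the view
to `U`. In a rule of the top part, `U` enters only through subjective literals over `U`; when
`V|_U = W|_U` is total, the reduct evaluates them, so `V` satisfies the rule iff `V|_Ū`
satisfies its reduct. Hence, among views total on `U`, the epistemic models of `Π` are exactly
the views whose two restrictions model `B_U(Π)` and `E_U(Π, W|_U)`.

Minimality transfers in both directions: a model strictly below `W|_U` or `W|_Ū`, glued with
the other half of `W`, is a model of `Π` strictly below `W`; conversely, a model of `Π`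
strictly below `W` restricts to models of the two parts, one of them strictly below its half
of `W`.
-/

namespace Epist

variable {α : Type}

section Views

variable {V W : BView α} {S : Set α}

lemma mem_vrestrict_of_mem {p : Set α × Set α} (hp : p ∈ V) :
    (p.1 ∩ S, p.2 ∩ S) ∈ vrestrict V S :=
  ⟨p, hp, rfl⟩

lemma totalView.snd_snd_mem (hW : totalView W) {p : Set α × Set α} (hp : p ∈ W) :
    (p.2, p.2) ∈ W := by
  rwa [show (p.2, p.2) = p from Prod.ext (hW p hp).symm rfl]

lemma tview_tview (V : BView α) : tview (tview V) = tview V := by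
  simp [tview, Set.image_image]

lemma totalView.tview_eq (hW : totalView W) : tview W = W := by
  ext p
  constructor
  · rintro ⟨q, hq, rfl⟩
    exact hW.snd_snd_mem hq
  · exact fun hp => ⟨p, hp, Prod.ext (hW p hp).symm rfl⟩

lemma totalView.vrestrict (hW : totalView W) (S : Set α) : totalView (vrestrict W S) := by
  rintro _ ⟨p, hp, rfl⟩
  simp [hW p hp]

lemma tview_vrestrict (V : BView α) (S : Set α) :
    tview (vrestrict V S) = vrestrict (tview V) S := by
  ext p
  constructor
  · rintro ⟨_, ⟨q, hq, rfl⟩, rfl⟩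
    exact ⟨(q.2, q.2), ⟨q, hq, rfl⟩, rfl⟩
  · rintro ⟨_, ⟨q, hq, rfl⟩, rfl⟩
    exact ⟨_, mem_vrestrict_of_mem hq, rfl⟩

lemma isBView.vrestrict (hV : isBView V) (S : Set α) : isBView (vrestrict V S) := by
  obtain ⟨⟨p, hp⟩, hwf⟩ := hV
  refine ⟨⟨_, mem_vrestrict_of_mem hp⟩, ?_⟩
  rintro _ ⟨q, hq, rfl⟩
  exact Set.inter_subset_inter_left S (hwf q hq)

lemma isBView_iff_vrestrict_compl :
    isBView V ↔ isBView (vrestrict V S) ∧ isBView (vrestrict V Sᶜ) := by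
  refine ⟨fun h => ⟨h.vrestrict S, h.vrestrict Sᶜ⟩, fun ⟨hS, hSc⟩ => ⟨?_, fun p hp a ha => ?_⟩⟩
  · obtain ⟨_, p, hp, -⟩ := hS.1
    exact ⟨p, hp⟩
  · by_cases haS : a ∈ S
    · exact (hS.2 _ (mem_vrestrict_of_mem hp) ⟨ha, haS⟩).1
    · exact (hSc.2 _ (mem_vrestrict_of_mem hp) ⟨ha, haS⟩).1

lemma totalView_of_vrestrict_compl (hS : totalView (vrestrict V S))
    (hSc : totalView (vrestrict V Sᶜ)) : totalView V := by
  intro p hp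
  have h₁ : p.1 ∩ S = p.2 ∩ S := hS _ (mem_vrestrict_of_mem hp)
  have h₂ : p.1 ∩ Sᶜ = p.2 ∩ Sᶜ := hSc _ (mem_vrestrict_of_mem hp)
  rw [← Set.inter_union_compl p.1 S, ← Set.inter_union_compl p.2 S, h₁, h₂]

lemma vrestrict_mono (h : viewLE V W) (S : Set α) :
    viewLE (vrestrict V S) (vrestrict W S) := by
  constructor
  · rintro _ ⟨p, hp, rfl⟩
    obtain ⟨H, hH, hsub⟩ := h.1 p hp
    exact ⟨H ∩ S, mem_vrestrict_of_mem hH, Set.inter_subset_inter_left S hsub⟩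
  · rintro _ ⟨p, hp, rfl⟩
    obtain ⟨H, hH, hsub⟩ := h.2 p hp
    exact ⟨H ∩ S, mem_vrestrict_of_mem hH, Set.inter_subset_inter_left S hsub⟩

lemma viewLE.eq_of_totalView (h : viewLE V W) (hV : totalView V) (hW : totalView W) :
    V = W := by
  ext p
  constructor
  · intro hp
    obtain ⟨H, hH, -⟩ := h.2 p hp
    rwa [show p = (H, p.2) from Prod.ext ((hW _ hH).symm ▸ hV p hp) rfl]
  · intro hp
    obtain ⟨H, hH, -⟩ := h.1 p hp
    rwa [show p = (H, p.2) from Prod.ext ((hV _ hH).symm ▸ hW p hp) rfl]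

lemma viewLE.eq_of_vrestrict_eq (h : viewLE V W) (hW : totalView W)
    (hS : vrestrict V S = vrestrict W S) (hSc : vrestrict V Sᶜ = vrestrict W Sᶜ) : V = W :=
  h.eq_of_totalView
    (totalView_of_vrestrict_compl (hS ▸ hW.vrestrict S) (hSc ▸ hW.vrestrict Sᶜ)) hW

end Views

section Satisfaction

@[simp]
lemma sat_top (V : BView α) (H T : Set α) : sat EForm.top V H T := by
  simp [EForm.top, EForm.neg, sat]

lemma epSat_K_iff {V : BView α} {φ : EForm α} : epSat V (.K φ) ↔ epSat V φ :=
  ⟨fun h p hp => h p hp p hp, fun h _ _ => h⟩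

lemma sat_disjForm {V : BView α} {H T : Set α} (l : List α) :
    sat (disjForm l) V H T ↔ ∃ a ∈ l, a ∈ H := by
  induction l with
  | nil => simp [disjForm, sat]
  | cons a l ih => simp [disjForm, sat, ih]

lemma epSat_iff_epSat_vrestrict {V : BView α} {S : Set α} {φ ψ : EForm α}
    (h : ∀ H T, sat φ V H T ↔ sat ψ (vrestrict V S) (H ∩ S) (T ∩ S)) :
    epSat V φ ↔ epSat (vrestrict V S) ψ := by
  constructor
  · rintro hφ _ ⟨p, hp, rfl⟩
    exact (h p.1 p.2).1 (hφ p hp)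
  · exact fun hψ p hp => (h p.1 p.2).2 (hψ _ (mem_vrestrict_of_mem hp))

lemma sat_iff_sat_vrestrict {S : Set α} {φ : EForm α} (hφ : φ.atoms ⊆ S) (V : BView α)
    (H T : Set α) : sat φ V H T ↔ sat φ (vrestrict V S) (H ∩ S) (T ∩ S) := by
  induction φ generalizing V H T with
  | bot => exact Iff.rfl
  | atom a =>
    have ha : a ∈ S := hφ rfl
    simp [sat, ha]
  | and φ ψ ihφ ihψ =>
    exact and_congr (ihφ (fun _ ha => hφ (.inl ha)) V H T) (ihψ (fun _ ha => hφ (.inr ha)) V H T)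
  | or φ ψ ihφ ihψ =>
    exact or_congr (ihφ (fun _ ha => hφ (.inl ha)) V H T) (ihψ (fun _ ha => hφ (.inr ha)) V H T)
  | imp φ ψ ihφ ihψ =>
    have hφ' : φ.atoms ⊆ S := fun _ ha => hφ (.inl ha)
    have hψ' : ψ.atoms ⊆ S := fun _ ha => hφ (.inr ha)
    simp only [sat, tview_vrestrict]
    exact and_congr (imp_congr (ihφ hφ' V H T) (ihψ hψ' V H T))
      (imp_congr (ihφ hφ' (tview V) T T) (ihψ hψ' (tview V) T T))
  | K φ ih => exact epSat_iff_epSat_vrestrict (ih hφ V)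

lemma epSat_iff_epSat_vrestrict_of_atoms_subset {S : Set α} {φ : EForm α}
    (hφ : φ.atoms ⊆ S) (V : BView α) : epSat V φ ↔ epSat (vrestrict V S) φ :=
  epSat_iff_epSat_vrestrict (sat_iff_sat_vrestrict hφ V)

lemma sat_tview_of_sat {V : BView α} (hV : ∀ p ∈ V, p.1 ⊆ p.2) (φ : EForm α) {H T : Set α}
    (hHT : H ⊆ T) (h : sat φ V H T) : sat φ (tview V) T T := by
  induction φ generalizing H T with
  | bot => exact h
  | atom a => exact hHT h
  | and φ ψ ihφ ihψ => exact ⟨ihφ hHT h.1, ihψ hHT h.2⟩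
  | or φ ψ ihφ ihψ => exact h.imp (ihφ hHT) (ihψ hHT)
  | imp φ ψ => exact ⟨h.2, by rw [tview_tview]; exact h.2⟩
  | K φ ih =>
    rintro _ ⟨p, hp, rfl⟩
    exact ih (hV p hp) (h p hp)

end Satisfaction

section Reduct

/-- Formulas in which atoms of `U` occur only inside subformulas `Kφ` with `Atoms(φ) ⊆ U`. -/
inductive TopFormula (U : Set α) : EForm α → Prop
  | bot : TopFormula U .bot
  | atom {a : α} : a ∉ U → TopFormula U (.atom a)
  | and {φ ψ : EForm α} : TopFormula U φ → TopFormula U ψ → TopFormula U (.and φ ψ)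
  | or {φ ψ : EForm α} : TopFormula U φ → TopFormula U ψ → TopFormula U (.or φ ψ)
  | imp {φ ψ : EForm α} : TopFormula U φ → TopFormula U ψ → TopFormula U (.imp φ ψ)
  | K_of_atoms_subset {φ : EForm α} : φ.atoms ⊆ U → TopFormula U (.K φ)
  | K {φ : EForm α} : TopFormula U φ → TopFormula U (.K φ)

variable {U : Set α}

lemma sat_K_iff_sat_reduct {W V : BView α} {φ : EForm α} (hφ : φ.atoms ⊆ U)
    (hV : vrestrict V U = W) (H T : Set α) :
    sat (.K φ) V H T ↔ sat (reduct W U (.K φ)) (vrestrict V Uᶜ) (H ∩ Uᶜ) (T ∩ Uᶜ) := by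
  have hK : sat (.K φ) V H T ↔ epSat W (.K φ) := by
    change epSat V φ ↔ _
    rw [epSat_K_iff, ← hV]
    exact epSat_iff_epSat_vrestrict_of_atoms_subset hφ V
  rw [hK]
  by_cases hW : epSat W (.K φ) <;> simp only [reduct, if_pos hφ, hW, if_true, if_false, sat_top, sat]

lemma sat_iff_sat_reduct {W : BView α} (hW : totalView W) {φ : EForm α} (hφ : TopFormula U φ)
    {V : BView α} (hV : vrestrict V U = W) (H T : Set α) :
    sat φ V H T ↔ sat (reduct W U φ) (vrestrict V Uᶜ) (H ∩ Uᶜ) (T ∩ Uᶜ) := by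
  induction hφ generalizing V H T with
  | bot => exact Iff.rfl
  | atom ha => simp [sat, reduct, ha]
  | and _ _ ihφ ihψ => exact and_congr (ihφ hV H T) (ihψ hV H T)
  | or _ _ ihφ ihψ => exact or_congr (ihφ hV H T) (ihψ hV H T)
  | imp _ _ ihφ ihψ =>
    have hVt : vrestrict (tview V) U = W := by rw [← tview_vrestrict, hV, hW.tview_eq]
    simp only [sat, reduct, tview_vrestrict]
    exact and_congr (imp_congr (ihφ hV H T) (ihψ hV H T))
      (imp_congr (ihφ hVt T T) (ihψ hVt T T))
  | K_of_atoms_subset hφU => exact sat_K_iff_sat_reduct hφU hV H T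
  | @K φ _ ih =>
    by_cases hφU : φ.atoms ⊆ U
    · exact sat_K_iff_sat_reduct hφU hV H T
    · simp only [reduct, if_neg hφU]
      exact epSat_iff_epSat_vrestrict (ih hV)

lemma epSat_iff_epSat_reduct {V : BView α} (hV : totalView (vrestrict V U)) {φ : EForm α}
    (hφ : TopFormula U φ) : epSat V φ ↔ epSat (vrestrict V Uᶜ) (reduct (vrestrict V U) U φ) :=
  epSat_iff_epSat_vrestrict (sat_iff_sat_reduct hV hφ rfl)

@[simp]
lemma EForm.atoms_neg (φ : EForm α) : φ.neg.atoms = φ.atoms := by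
  simp [EForm.neg, EForm.atoms]

lemma TopFormula.neg {φ : EForm α} (h : TopFormula U φ) : TopFormula U φ.neg :=
  .imp h .bot

lemma TopFormula.top : TopFormula U (EForm.top (α := α)) :=
  TopFormula.bot.neg

lemma TopFormula.of_isAtomBase {φ : EForm α} (h : isAtomBase φ) (hφ : φ.atoms ⊆ Uᶜ) :
    TopFormula U φ := by
  rcases h with ⟨a, rfl⟩ | rfl | rfl
  · exact .atom (hφ rfl)
  · exact .top
  · exact .bot

lemma TopFormula.of_isObjLit {φ : EForm α} (h : isObjLit φ) (hφ : φ.atoms ⊆ Uᶜ) :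
    TopFormula U φ := by
  rcases h with h | ⟨ψ, hψ, rfl⟩ | ⟨ψ, hψ, rfl⟩
  · exact .of_isAtomBase h hφ
  · exact (TopFormula.of_isAtomBase hψ (by simpa using hφ)).neg
  · exact (TopFormula.of_isAtomBase hψ (by simpa using hφ)).neg.neg

lemma isObjLit.atoms_subset_or {φ : EForm α} (h : isObjLit φ) (U : Set α) :
    φ.atoms ⊆ U ∨ φ.atoms ⊆ Uᶜ := by
  rcases h with h | ⟨ψ, h, rfl⟩ | ⟨ψ, h, rfl⟩ <;>
  rcases h with ⟨a, rfl⟩ | rfl | rfl <;>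
  simp [EForm.atoms, EForm.neg, EForm.top, em]

lemma TopFormula.of_isSubjLit {φ : EForm α} (h : isSubjLit φ) : TopFormula U φ := by
  have hK : ∀ l : EForm α, isObjLit l → TopFormula U (.K l) := fun l hl =>
    (hl.atoms_subset_or U).elim .K_of_atoms_subset fun hlU => .K (.of_isObjLit hl hlU)
  rcases h with ⟨l, hl, rfl⟩ | ⟨l, hl, rfl⟩ | ⟨l, hl, rfl⟩
  · exact hK l hl
  · exact (hK l hl).neg
  · exact (hK l hl).neg.neg

lemma TopFormula.disjForm {l : List α} (hl : ∀ a ∈ l, a ∉ U) : TopFormula U (disjForm l) := by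
  induction l with
  | nil => exact .bot
  | cons a l ih =>
    exact .or (.atom (hl a (by simp))) (ih fun b hb => hl b (by simp [hb]))

lemma TopFormula.conjForm {L : List (EForm α)} (hL : ∀ φ ∈ L, TopFormula U φ) :
    TopFormula U (conjForm L) := by
  induction L with
  | nil => exact .top
  | cons φ L ih => exact .and (hL φ (by simp)) (ih fun ψ hψ => hL ψ (by simp [hψ]))

lemma TopFormula.form {r : ERule α} (hr : r.wf) (hU : (r.objBodyAtoms ∪ r.headAtoms) ∩ U = ∅) :
    TopFormula U r.form := by
  have hout : ∀ a ∈ r.objBodyAtoms ∪ r.headAtoms, a ∉ U := fun a ha haU =>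
    (Set.eq_empty_iff_forall_notMem.1 hU) a ⟨ha, haU⟩
  refine .imp (.conjForm fun φ hφ => ?_) (.disjForm fun a ha => hout a (.inr ha))
  rcases hr φ hφ with hobj | hsubj
  · exact .of_isObjLit hobj fun a ha => hout a (.inl ⟨φ, hφ, hobj, ha⟩)
  · exact .of_isSubjLit hsubj

lemma reduct_disjForm {W : BView α} (l : List α) : reduct W U (disjForm l) = disjForm l := by
  induction l with
  | nil => rfl
  | cons a l ih => simp only [disjForm, reduct, ih]

lemma reduct_conjForm {W : BView α} (L : List (EForm α)) :
    reduct W U (conjForm L) = conjForm (L.map (reduct W U)) := by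
  induction L with
  | nil => rfl
  | cons φ L ih => simp only [conjForm, List.map, reduct, ih]

lemma reduct_form {W : BView α} (r : ERule α) :
    reduct W U r.form = (ruleReduct W U r).form := by
  simp only [ERule.form, ruleReduct, reduct, reduct_conjForm, reduct_disjForm]

end Reduct

section Programs

variable {P B Tp : EProgram α} {U : Set α} {V : BView α}

lemma epModel_progTheory : epModel V (progTheory P) ↔ isBView V ∧ ∀ r ∈ P, epSat V r.form := by
  simp [epModel, progTheory]

lemma epModel_progTheory_EU {W : BView α} :
    epModel V (progTheory (EU Tp W U)) ↔ isBView V ∧ ∀ r ∈ Tp, epSat V (reduct W U r.form) := by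
  simp [epModel_progTheory, EU, reduct_form]

lemma ERule.atoms_form_subset (r : ERule α) : r.form.atoms ⊆ r.atoms := by
  have hconj : ∀ L : List (EForm α), (conjForm L).atoms ⊆ {a | ∃ φ ∈ L, a ∈ φ.atoms} := by
    intro L
    induction L with
    | nil => simp [conjForm, EForm.top, EForm.neg, EForm.atoms]
    | cons φ L ih =>
      rintro a (ha | ha)
      · exact ⟨φ, by simp, ha⟩
      · obtain ⟨ψ, hψ, haψ⟩ := ih ha
        exact ⟨ψ, by simp [hψ], haψ⟩
  have hdisj : ∀ l : List α, (disjForm l).atoms ⊆ {a | a ∈ l} := by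
    intro l
    induction l with
    | nil => simp [disjForm, EForm.atoms]
    | cons b l ih =>
      rintro a (rfl | ha)
      · exact List.mem_cons_self
      · exact List.mem_cons_of_mem b (ih ha)
  rintro a (ha | ha)
  · exact .inr (hconj _ ha)
  · exact .inl (hdisj _ ha)

lemma isSplitting.epSat_bottom_iff (hBT : isSplitting P U B Tp) {r : ERule α} (hr : r ∈ B) :
    epSat V r.form ↔ epSat (vrestrict V U) r.form :=
  epSat_iff_epSat_vrestrict_of_atoms_subset ((r.atoms_form_subset).trans (hBT.2.2.1 r hr)) V

lemma isSplitting.epModel_vrestrict (hBT : isSplitting P U B Tp)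
    (hV : epModel V (progTheory P)) : epModel (vrestrict V U) (progTheory B) := by
  rw [epModel_progTheory] at hV ⊢
  refine ⟨hV.1.vrestrict U, fun r hr => (hBT.epSat_bottom_iff hr).1 (hV.2 r ?_)⟩
  exact hBT.2.1 ▸ Or.inl hr

theorem isSplitting.epModel_iff (hwf : progWF P) (hBT : isSplitting P U B Tp)
    (hV : totalView (vrestrict V U)) :
    epModel V (progTheory P) ↔
      epModel (vrestrict V U) (progTheory B) ∧
      epModel (vrestrict V Uᶜ) (progTheory (EU Tp (vrestrict V U) U)) := by
  have hTp : ∀ r ∈ Tp, epSat V r.form ↔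
      epSat (vrestrict V Uᶜ) (reduct (vrestrict V U) U r.form) := fun r hr =>
    epSat_iff_epSat_reduct hV (.form (hwf r (hBT.2.1 ▸ Or.inr hr)) (hBT.2.2.2 r hr))
  rw [epModel_progTheory, epModel_progTheory, epModel_progTheory_EU, ← hBT.2.1,
    isBView_iff_vrestrict_compl (S := U)]
  simp only [Set.mem_union, or_imp, forall_and]
  rw [and_and_and_comm]
  exact and_congr (and_congr_right' (forall₂_congr fun r hr => hBT.epSat_bottom_iff hr))
    (and_congr_right' (forall₂_congr hTp))

end Programs

section Replace

variable {W V : BView α} {S : Set α}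

def vreplace (W : BView α) (S : Set α) (V : BView α) : BView α :=
  {p | (p.2, p.2) ∈ W ∧ (p.1 ∩ S, p.2 ∩ S) ∈ V ∧ p.1 ∩ Sᶜ = p.2 ∩ Sᶜ}

lemma exists_mem_of_viewLE_vrestrict (hW : totalView W) (hle : viewLE V (vrestrict W S))
    {q : Set α × Set α} (hq : q ∈ V) : q.1 ⊆ q.2 ∧ ∃ T, (T, T) ∈ W ∧ q.2 = T ∩ S := by
  obtain ⟨_, ⟨p, hp, hpq⟩, hsub⟩ := hle.2 q hq
  obtain ⟨h₁, h₂⟩ := Prod.mk.inj hpq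
  refine ⟨?_, p.2, hW.snd_snd_mem hp, h₂⟩
  rwa [h₁, hW p hp, ← h₂] at hsub

lemma mk_mem_vreplace (hW : totalView W) (hle : viewLE V (vrestrict W S)) {H T : Set α}
    (hT : (T, T) ∈ W) (hH : (H, T ∩ S) ∈ V) : (H ∪ T ∩ Sᶜ, T) ∈ vreplace W S V ∧
      (H ∪ T ∩ Sᶜ) ∩ S = H ∧ (H ∪ T ∩ Sᶜ) ∩ Sᶜ = T ∩ Sᶜ ∧ H ∪ T ∩ Sᶜ ⊆ T := by
  have hHT : ∀ a ∈ H, a ∈ T ∧ a ∈ S := fun a ha =>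
    (exists_mem_of_viewLE_vrestrict hW hle hH).1 ha
  have h₁ : (H ∪ T ∩ Sᶜ) ∩ S = H := by
    ext a
    have := hHT a
    simp only [Set.mem_inter_iff, Set.mem_union, Set.mem_compl_iff]
    tauto
  have h₂ : (H ∪ T ∩ Sᶜ) ∩ Sᶜ = T ∩ Sᶜ := by
    ext a
    have := hHT a
    simp only [Set.mem_inter_iff, Set.mem_union, Set.mem_compl_iff]
    tauto
  refine ⟨⟨hT, by dsimp only; rwa [h₁], h₂⟩, h₁, h₂, Set.union_subset (fun a ha => (hHT a ha).1)
    Set.inter_subset_left⟩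

lemma exists_mem_vreplace (hW : totalView W) (hle : viewLE V (vrestrict W S))
    {p : Set α × Set α} (hp : p ∈ W) :
    ∃ H, (H, p.2) ∈ vreplace W S V ∧ H ∩ Sᶜ = p.2 ∩ Sᶜ ∧ H ⊆ p.2 := by
  obtain ⟨H, hH, -⟩ := hle.1 _ (mem_vrestrict_of_mem hp)
  obtain ⟨hmem, -, h₂, hsub⟩ := mk_mem_vreplace hW hle (hW.snd_snd_mem hp) hH
  exact ⟨_, hmem, h₂, hsub⟩

lemma vrestrict_vreplace (hW : totalView W) (hle : viewLE V (vrestrict W S)) :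
    vrestrict (vreplace W S V) S = V := by
  ext q
  constructor
  · rintro ⟨p, ⟨-, hp, -⟩, rfl⟩
    exact hp
  · intro hq
    obtain ⟨-, T, hT, hqT⟩ := exists_mem_of_viewLE_vrestrict hW hle hq
    obtain ⟨hmem, h₁, -⟩ := mk_mem_vreplace hW hle hT (by rw [← hqT]; exact hq)
    exact ⟨_, hmem, Prod.ext h₁.symm hqT⟩

lemma vrestrict_compl_vreplace (hW : totalView W) (hle : viewLE V (vrestrict W S)) :
    vrestrict (vreplace W S V) Sᶜ = vrestrict W Sᶜ := by
  ext q
  constructor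
  · rintro ⟨p, ⟨hp, -, hpS⟩, rfl⟩
    exact ⟨_, hp, by rw [hpS]⟩
  · rintro ⟨p, hp, rfl⟩
    obtain ⟨H, hmem, hH, -⟩ := exists_mem_vreplace hW hle hp
    exact ⟨_, hmem, by rw [hH, hW p hp]⟩

lemma tview_vreplace (hW : totalView W) (hle : viewLE V (vrestrict W S)) :
    tview (vreplace W S V) = W := by
  ext p
  constructor
  · rintro ⟨q, ⟨hq, -⟩, rfl⟩
    exact hq
  · intro hp
    obtain ⟨H, hmem, -⟩ := exists_mem_vreplace hW hle hp
    exact ⟨_, hmem, Prod.ext (hW p hp).symm rfl⟩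

lemma vreplace_viewLT (hW : totalView W) (hlt : viewLT V (vrestrict W S)) :
    viewLT (vreplace W S V) W := by
  have hle := hlt.1
  refine ⟨⟨fun p hp => ?_, fun p hp => ⟨p.2, hp.1, ?_⟩⟩, fun heq => hlt.2 ?_⟩
  · obtain ⟨H, hmem, -, hsub⟩ := exists_mem_vreplace hW hle hp
    exact ⟨H, hmem, hW p hp ▸ hsub⟩
  · obtain ⟨-, hpV, hpS⟩ := hp
    have hsub := (exists_mem_of_viewLE_vrestrict hW hle hpV).1
    intro a ha
    by_cases haS : a ∈ S
    · exact (hsub ⟨ha, haS⟩).1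
    · exact (show a ∈ p.2 ∩ Sᶜ from hpS ▸ ⟨ha, haS⟩).1
  · rw [← vrestrict_vreplace hW hle, heq]

end Replace

section Minimality

variable {P B Tp : EProgram α} {U : Set α} {W V : BView α}

/-- A body true at `⟨H, T⟩` stays true at `⟨T, T⟩`, where `W` yields the head; the head lies in
`A`, where `H` and `T` agree. -/
lemma epSat_form_of_tview_eq {A : Set α} (hV : ∀ p ∈ V, p.1 ⊆ p.2) (hVA : ∀ p ∈ V, p.2 ∩ A ⊆ p.1)
    (hVW : tview V = W) {r : ERule α} (hr : r.headAtoms ⊆ A) (hW : epSat W r.form) :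
    epSat V r.form := by
  intro p hp
  have hWp := hW _ (hVW ▸ ⟨p, hp, rfl⟩ : (p.2, p.2) ∈ W)
  refine ⟨fun hbody => ?_, hVW ▸ hWp.1⟩
  have hbody' := hVW ▸ sat_tview_of_sat hV _ (hV p hp) hbody
  obtain ⟨a, ha, haT⟩ := (sat_disjForm r.head).1 (hWp.1 hbody')
  exact (sat_disjForm r.head).2 ⟨a, ha, hVA p hp ⟨haT, hr ha⟩⟩

lemma isSplitting.epModel_vreplace (hBT : isSplitting P U B Tp) (hW : totalView W)
    (hM : epModel W (progTheory P)) (hle : viewLE V (vrestrict W U))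
    (hV : epModel V (progTheory B)) : epModel (vreplace W U V) (progTheory P) := by
  have hbv : isBView (vreplace W U V) := isBView_iff_vrestrict_compl.2
    ⟨vrestrict_vreplace hW hle ▸ hV.1, vrestrict_compl_vreplace hW hle ▸ hM.1.vrestrict Uᶜ⟩
  rw [epModel_progTheory] at hM hV ⊢
  refine ⟨hbv, fun r hr => ?_⟩
  rw [← hBT.2.1] at hr
  rcases hr with hr | hr
  · rw [hBT.epSat_bottom_iff hr, vrestrict_vreplace hW hle]
    exact hV.2 r hr
  · refine epSat_form_of_tview_eq hbv.2 (fun p hp => ?_) (tview_vreplace hW hle) (A := Uᶜ)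
      (fun a ha haU => ?_) (hM.2 r (hBT.2.1 ▸ Or.inr hr))
    · exact hp.2.2 ▸ Set.inter_subset_left
    · exact (Set.eq_empty_iff_forall_notMem.1 (hBT.2.2.2 r hr)) a ⟨.inr ha, haU⟩

end Minimality

theorem stmt8_general {α : Type} (P : EProgram α) (hwf : progWF P) (U : Set α)
    (B Tp : EProgram α) (hBT : isSplitting P U B Tp)
    (W : BView α) (hW : totalView W) :
    FEEL (progTheory P) W ↔
      FEEL (progTheory B) (vrestrict W U) ∧
      FEEL (progTheory (EU Tp (vrestrict W U) U)) (vrestrict W Uᶜ) := by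
  have hWU := hW.vrestrict U
  constructor
  · rintro ⟨-, hM, hmin⟩
    obtain ⟨hMB, hMT⟩ := (hBT.epModel_iff hwf hWU).1 hM
    refine ⟨⟨hWU, hMB, fun V hV hlt => ?_⟩, ⟨hW.vrestrict Uᶜ, hMT, fun V hV hlt => ?_⟩⟩
    · exact hmin _ (hBT.epModel_vreplace hW hM hlt.1 hV) (vreplace_viewLT hW hlt)
    · have hU : vrestrict (vreplace W Uᶜ V) U = vrestrict W U := by
        simpa using vrestrict_compl_vreplace hW hlt.1
      refine hmin _ ((hBT.epModel_iff hwf (hU ▸ hWU)).2 ?_) (vreplace_viewLT hW hlt)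
      rw [hU, vrestrict_vreplace hW hlt.1]
      exact ⟨hMB, hV⟩
  · rintro ⟨⟨-, hMB, hminB⟩, -, hMT, hminT⟩
    refine ⟨hW, (hBT.epModel_iff hwf hWU).2 ⟨hMB, hMT⟩, fun W₁ hM₁ hlt => ?_⟩
    by_cases hU₁ : vrestrict W₁ U = vrestrict W U
    · have hT₁ := ((hBT.epModel_iff hwf (hU₁ ▸ hWU)).1 hM₁).2
      rw [hU₁] at hT₁
      by_cases hUc₁ : vrestrict W₁ Uᶜ = vrestrict W Uᶜ
      · exact hlt.2 (hlt.1.eq_of_vrestrict_eq hW hU₁ hUc₁)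
      · exact hminT _ hT₁ ⟨vrestrict_mono hlt.1 Uᶜ, hUc₁⟩
    · exact hminB _ (hBT.epModel_vrestrict hM₁) ⟨vrestrict_mono hlt.1 U, hU₁⟩

/-- W is a FEEL-world view of Π iff W|_U is a FEEL-world view of
B_U(Π) and W|_Ū is a FEEL-world view of E_U(Π,W|_U). -/
theorem stmt8 {α : Type} (P : EProgram α) (hwf : progWF P) (U : Set α)
    (hU : splittingSet P U) (B Tp : EProgram α) (hBT : isSplitting P U B Tp)
    (W : BView α) (hW : totalView W) :
    FEEL (progTheory P) W ↔
      FEEL (progTheory B) (vrestrict W U) ∧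
      FEEL (progTheory (EU Tp (vrestrict W U) U)) (vrestrict W Uᶜ) :=
  stmt8_general P hwf U B Tp hBT W hW

end Epist
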